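/- arXiv:1006.1741 — 2 statements merged into one kernel-verified Lean document; each statement's English description precedes it below -/
import Mathlib

section
/- Let G = (X, E, Y) be a finite connected graph with nonempty Y ⊆ X, and let g : Y → ℝ^m. Among all extensions u : X → ℝ^m of g, there exists one whose vector lv(u) of values of Su listed in non-increasing order is lexicographically minimal; any such lexicographic minimizer is a tight extension of g. -/
/-!
A lexicographic minimizer exists because clipping every coordinate to a box containing the
boundary data is `1`-Lipschitz: it maps any extension to one with values in a fixed compact set
without increasing any `Su`. On a compact set, the non-increasing rearrangement of finitely many
continuous functions attains a lexicographic minimum: minimize the largest value first, then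
recurse on the remaining ones.

A lexicographic minimizer `u` is tight: if `v` were tighter, pick `x₀` realizing the first
supremum in the definition. Then `Sv x₀ < Su x₀`, and wherever `Sv` exceeds `Su` it stays below
`Su x₀`, so the non-increasing rearrangement of `Sv` is lexicographically below that of `Su`.
-/

/-- The local Lipschitz constant `Su(x) = sup_{y ~ x} ‖u y - u x‖` of a vertex function. -/
noncomputable def Sloc {X : Type*} {m : ℕ} (G : SimpleGraph X)
    (u : X → EuclideanSpace ℝ (Fin m)) (x : X) : ℝ :=
  sSup {d : ℝ | ∃ y, G.Adj x y ∧ d = ‖u y - u x‖}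

/-- `v` is tighter than `u` on `G` relative to the boundary set `Y`. -/
noncomputable def Tighter {X : Type*} {m : ℕ} (G : SimpleGraph X) (Y : Set X)
    (v u : X → EuclideanSpace ℝ (Fin m)) : Prop :=
  (∀ y ∈ Y, v y = u y) ∧
    sSup {d : ℝ | ∃ x, x ∉ Y ∧ Sloc G u x = d ∧ Sloc G v x < Sloc G u x} >
      sSup {d : ℝ | ∃ x, x ∉ Y ∧ Sloc G v x = d ∧ Sloc G u x < Sloc G v x}



/-- `u` is a tight function on `G` relative to the boundary set `Y`. -/
noncomputable def Tight {X : Type*} {m : ℕ} (G : SimpleGraph X) (Y : Set X)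
    (u : X → EuclideanSpace ℝ (Fin m)) : Prop :=
  ¬ ∃ v, Tighter G Y v u

/-- The values of `Su` on `X \ Y`, listed in non-increasing order. -/
noncomputable def lv {X : Type*} [Fintype X] [DecidableEq X] {m : ℕ} (G : SimpleGraph X)
    (Y : Finset X) (u : X → EuclideanSpace ℝ (Fin m)) : List ℝ :=
  (((Finset.univ \ Y).val.map (Sloc G u)).sort (· ≤ ·)).reverse

namespace Multiset

variable {ι α : Type*} [LinearOrder α]

theorem reverse_sort_le (s : Multiset α) : (s.sort (· ≤ ·)).reverse = s.sort (· ≥ ·) := by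
  refine List.Perm.eq_of_pairwise' (r := (· ≥ ·)) ?_ (pairwise_sort _ _) ?_
  · rw [List.pairwise_reverse]
    exact pairwise_sort _ _
  · rw [← coe_eq_coe, coe_reverse, sort_eq, sort_eq]

variable [DecidableEq ι] {f g : ι → α} {s : Multiset ι}

theorem sort_ge_map_eq_cons {i : ι} (hi : i ∈ s) (hmax : ∀ j ∈ s, f j ≤ f i) :
    (s.map f).sort (· ≥ ·) = f i :: ((s.erase i).map f).sort (· ≥ ·) := by
  conv_lhs => rw [← cons_erase hi, map_cons]
  refine sort_cons _ _ _ fun a ha => ?_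
  obtain ⟨j, hj, rfl⟩ := mem_map.mp ha
  exact hmax j (mem_of_mem_erase hj)

theorem sort_ge_map_lt_sort_ge_map {i₀ : ι} (hi₀ : i₀ ∈ s) (hlt : f i₀ < g i₀)
    (hdom : ∀ i ∈ s, g i < f i → f i < g i₀) :
    (s.map f).sort (· ≥ ·) < (s.map g).sort (· ≥ ·) := by
  induction hn : card s generalizing s with
  | zero => simp_all
  | succ n ih =>
    have hs : s ≠ 0 := fun h => by simp [h] at hi₀
    obtain ⟨j, hj, hjmax⟩ := exists_max_image g hs
    obtain ⟨i, hi, himax⟩ := exists_max_image f hs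
    have hg₀ : g i₀ ≤ g j := hjmax i₀ hi₀
    have hfi : f i ≤ g j := by
      by_cases h : g i < f i
      · exact ((hdom i hi h).trans_le hg₀).le
      · exact (not_lt.mp h).trans (hjmax i hi)
    rw [sort_ge_map_eq_cons hi himax]
    rcases hfi.lt_or_eq with hfi | hfi
    · rw [sort_ge_map_eq_cons hj hjmax]
      exact List.Lex.rel hfi
    -- the common maximum `f i = g j` is also attained by `g` at `i`, so `i` can be peeled off
    have hgi : g i = f i := le_antisymm (hfi ▸ hjmax i hi)
      (not_lt.mp fun h => (hdom i hi h).not_ge (hfi ▸ hg₀))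
    rw [sort_ge_map_eq_cons hi fun k hk => hgi ▸ hfi ▸ hjmax k hk, hgi]
    have hi₀i : i₀ ≠ i := by
      rintro rfl
      exact hlt.not_ge (hfi ▸ hg₀)
    refine List.Lex.cons (ih ((mem_erase_of_ne hi₀i).mpr hi₀)
      (fun k hk => hdom k (mem_of_mem_erase hk)) ?_)
    rw [card_erase_of_mem hi, hn]; rfl

theorem sort_ge_map_le_sort_ge_map (h : ∀ i ∈ s, f i ≤ g i) :
    (s.map f).sort (· ≥ ·) ≤ (s.map g).sort (· ≥ ·) := by
  by_cases heq : ∀ i ∈ s, f i = g i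
  · rw [map_congr rfl heq]
  push Not at heq
  obtain ⟨i, hi, hne⟩ := heq
  exact (sort_ge_map_lt_sort_ge_map hi ((h i hi).lt_of_ne hne)
    fun j hj hlt => absurd (h j hj) hlt.not_ge).le

end Multiset

theorem exists_isMinOn_biUnion {ι α β : Type*} [LinearOrder β] {φ : α → β} {T : Finset ι}
    {L : ι → Set α} (hne : (⋃ i ∈ T, L i).Nonempty)
    (hmin : ∀ i ∈ T, (L i).Nonempty → ∃ u ∈ L i, IsMinOn φ (L i) u) :
    ∃ u ∈ ⋃ i ∈ T, L i, IsMinOn φ (⋃ i ∈ T, L i) u := by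
  classical
  obtain ⟨v, hv⟩ := hne
  obtain ⟨j, hjT, hj⟩ := Set.mem_iUnion₂.mp hv
  have : Nonempty α := ⟨v⟩
  choose! u hu hmin using hmin
  obtain ⟨i, hi, himin⟩ := (T.filter fun i => (L i).Nonempty).exists_min_image (φ ∘ u)
    ⟨j, Finset.mem_filter.mpr ⟨hjT, v, hj⟩⟩
  obtain ⟨hiT, hiL⟩ := Finset.mem_filter.mp hi
  refine ⟨u i, Set.mem_biUnion hiT (hu i hiT hiL), fun w hw => ?_⟩
  obtain ⟨k, hkT, hk⟩ := Set.mem_iUnion₂.mp hw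
  exact (himin k (Finset.mem_filter.mpr ⟨hkT, w, hk⟩)).trans (hmin k hkT ⟨w, hk⟩ hk)

open Multiset in
theorem IsCompact.exists_isMinOn_sort_ge_map {α ι β : Type*} [TopologicalSpace α]
    [DecidableEq ι] [LinearOrder β] [TopologicalSpace β] [OrderClosedTopology β] {F : α → ι → β}
    (hF : ∀ i, Continuous fun a => F a i) {K : Set α} (hK : IsCompact K) (hne : K.Nonempty)
    (s : Multiset ι) : ∃ u ∈ K, IsMinOn (fun a => (s.map (F a)).sort (· ≥ ·)) K u := by
  induction hn : card s generalizing s K with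
  | zero =>
    obtain ⟨u, hu⟩ := hne
    exact ⟨u, hu, fun v _ => by simp [card_eq_zero.mp hn]⟩
  | succ n ih =>
    have hs : s ≠ 0 := fun h => by simp [h] at hn
    -- split `K` according to which `i ∈ s` carries the largest value `F a i`
    set L : ι → Set α := fun i => K ∩ {a | ∀ j ∈ s, F a j ≤ F a i}
    have hcover : K = ⋃ i ∈ s.toFinset, L i := by
      refine subset_antisymm (fun a ha => ?_) (Set.iUnion₂_subset fun i _ => Set.inter_subset_left)
      obtain ⟨i, hi, hmax⟩ := exists_max_image (F a) hs
      exact Set.mem_biUnion (mem_toFinset.mpr hi) ⟨ha, hmax⟩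
    rw [hcover] at hne ⊢
    refine exists_isMinOn_biUnion hne fun i hi hLne => ?_
    have hi : i ∈ s := mem_toFinset.mp hi
    have hLc : IsCompact (L i) :=
      hK.inter_right (by
        simpa only [Set.ofPred_forall] using isClosed_iInter fun j => isClosed_iInter
          fun (_ : j ∈ s) => isClosed_le (hF j) (hF i))
    obtain ⟨u₀, hu₀, hu₀min⟩ := hLc.exists_isMinOn hLne (hF i).continuousOn
    obtain ⟨u, ⟨huL, hu⟩, humin⟩ := ih (hLc.inter_right (isClosed_eq (hF i) continuous_const))
      ⟨u₀, hu₀, rfl⟩ (s.erase i) (by rw [card_erase_of_mem hi, hn]; rfl)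
    refine ⟨u, huL, fun v hv => ?_⟩
    have hv₀ : F u₀ i ≤ F v i := hu₀min hv
    change ((s.map (F u)).sort (· ≥ ·)) ≤ (s.map (F v)).sort (· ≥ ·)
    rw [sort_ge_map_eq_cons hi huL.2, sort_ge_map_eq_cons hi hv.2, hu]
    rcases hv₀.lt_or_eq with hlt | heq
    · exact le_of_lt (List.Lex.rel hlt)
    · rw [← heq]
      exact List.cons_le_cons _ (humin ⟨hv, heq.symm⟩)

section Sloc

variable {X : Type*} {m : ℕ} (G : SimpleGraph X)

theorem Sloc_nonneg (u : X → EuclideanSpace ℝ (Fin m)) (x : X) : 0 ≤ Sloc G u x :=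
  Real.sSup_nonneg fun _ ⟨_, _, hd⟩ => hd ▸ norm_nonneg _

theorem Sloc_eq_sup' [Fintype X] [DecidableRel G.Adj] (u : X → EuclideanSpace ℝ (Fin m)) (x : X)
    (h : (G.neighborFinset x).Nonempty) :
    Sloc G u x = (G.neighborFinset x).sup' h fun y => ‖u y - u x‖ := by
  rw [Finset.sup'_eq_csSup_image, Sloc]
  congr 1
  ext d
  simp [eq_comm]

theorem Sloc_of_isIsolated (u : X → EuclideanSpace ℝ (Fin m)) {x : X} (h : G.IsIsolated x) :
    Sloc G u x = 0 := by
  simp [Sloc, show ∀ y, ¬ G.Adj x y from h]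

variable [Finite X]

theorem Sloc_le_Sloc {u v : X → EuclideanSpace ℝ (Fin m)} {x : X}
    (h : ∀ y, G.Adj x y → ‖v y - v x‖ ≤ ‖u y - u x‖) : Sloc G v x ≤ Sloc G u x := by
  have hbdd : BddAbove {d : ℝ | ∃ y, G.Adj x y ∧ d = ‖u y - u x‖} :=
    ((Set.finite_range fun y => ‖u y - u x‖).subset
      (by rintro _ ⟨y, -, rfl⟩; exact ⟨y, rfl⟩)).bddAbove
  exact Real.sSup_le (fun _ ⟨y, hy, hd⟩ => hd ▸ (h y hy).trans (le_csSup hbdd ⟨y, hy, rfl⟩))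
    (Sloc_nonneg G u x)

theorem continuous_Sloc (x : X) :
    Continuous fun u : X → EuclideanSpace ℝ (Fin m) => Sloc G u x := by
  classical
  have := Fintype.ofFinite X
  by_cases h : (G.neighborFinset x).Nonempty
  · simp_rw [Sloc_eq_sup' G _ x h]
    exact Continuous.finset_sup'_apply h fun y _ => by fun_prop
  · have hx : G.IsIsolated x := by simpa [Finset.not_nonempty_iff_eq_empty] using h
    simp_rw [Sloc_of_isIsolated G _ hx]
    exact continuous_const

end Sloc

section projBox

variable {ι : Type*} {a b : ℝ}

noncomputable def projBox (h : a ≤ b) (p : EuclideanSpace ℝ ι) : EuclideanSpace ℝ ι :=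
  WithLp.toLp 2 fun i => (Set.projIcc a b h (p i) : ℝ)

theorem lipschitzWith_projBox [Fintype ι] (h : a ≤ b) : LipschitzWith 1 (projBox (ι := ι) h) := by
  refine LipschitzWith.of_dist_le_mul fun p q => ?_
  rw [NNReal.coe_one, one_mul, EuclideanSpace.dist_eq, EuclideanSpace.dist_eq]
  gcongr with i
  exact (LipschitzWith.projIcc h).dist_le_mul (p i) (q i) |>.trans_eq (one_mul _)

theorem projBox_mem (h : a ≤ b) (p : EuclideanSpace ℝ ι) :
    projBox h p ∈ WithLp.toLp 2 '' Set.univ.pi fun _ : ι => Set.Icc a b :=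
  ⟨_, fun i _ => (Set.projIcc a b h (p i)).2, rfl⟩

theorem projBox_eq_self (h : a ≤ b) {p : EuclideanSpace ℝ ι} (hp : ∀ i, p i ∈ Set.Icc a b) :
    projBox h p = p := by
  ext i
  simp [projBox, Set.projIcc_of_mem h (hp i)]

end projBox

section Extension

variable {X : Type*} [Fintype X] [DecidableEq X] {m : ℕ} (G : SimpleGraph X) (Y : Finset X)

theorem lv_eq_sort_ge (u : X → EuclideanSpace ℝ (Fin m)) :
    lv G Y u = ((Finset.univ \ Y).val.map (Sloc G u)).sort (· ≥ ·) :=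
  Multiset.reverse_sort_le _

theorem lv_comp_le_lv {P : EuclideanSpace ℝ (Fin m) → EuclideanSpace ℝ (Fin m)}
    (hP : LipschitzWith 1 P) (v : X → EuclideanSpace ℝ (Fin m)) : lv G Y (P ∘ v) ≤ lv G Y v := by
  simp only [lv_eq_sort_ge]
  refine Multiset.sort_ge_map_le_sort_ge_map fun x _ => Sloc_le_Sloc G fun y _ => ?_
  simpa only [← dist_eq_norm, Function.comp_apply, NNReal.coe_one, one_mul] using
    hP.dist_le_mul (v y) (v x)

theorem exists_isMinOn_lv (g : X → EuclideanSpace ℝ (Fin m)) :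
    ∃ u ∈ {u | ∀ y ∈ Y, u y = g y}, IsMinOn (lv G Y) {u | ∀ y ∈ Y, u y = g y} u := by
  set R := ∑ y ∈ Y, ‖g y‖
  have hR : -R ≤ R := neg_le_self (Finset.sum_nonneg fun y _ => norm_nonneg (g y))
  have hg : ∀ y ∈ Y, projBox hR (g y) = g y := fun y hy => projBox_eq_self hR fun i =>
    abs_le.mp ((PiLp.norm_apply_le (g y) i).trans
      (Finset.single_le_sum (fun y _ => norm_nonneg (g y)) hy))
  set K := (Set.univ.pi fun _ : X => WithLp.toLp 2 '' Set.univ.pi fun _ : Fin m => Set.Icc (-R) R)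
    ∩ {u | ∀ y ∈ Y, u y = g y}
  have hK : IsCompact K :=
    (isCompact_univ_pi fun _ => (isCompact_univ_pi fun _ => isCompact_Icc).image
      (PiLp.continuous_toLp 2 _)).inter_right (isClosed_set_pi fun y _ => isClosed_singleton)
  have hclip : ∀ v ∈ {u | ∀ y ∈ Y, u y = g y}, projBox hR ∘ v ∈ K := fun v hv =>
    ⟨fun x _ => projBox_mem hR (v x), fun y hy => by simp [hv y hy, hg y hy]⟩
  obtain ⟨u, huK, humin⟩ := hK.exists_isMinOn_sort_ge_map (continuous_Sloc G)
    ⟨_, hclip g fun _ _ => rfl⟩ (Finset.univ \ Y).val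
  refine ⟨u, huK.2, fun v hv => ?_⟩
  have := humin (hclip v hv)
  simp only [Set.mem_ofPred_eq, ← lv_eq_sort_ge] at this ⊢
  exact this.trans (lv_comp_le_lv G Y (lipschitzWith_projBox hR) v)

theorem tight_of_isMinOn_lv {g u : X → EuclideanSpace ℝ (Fin m)} (hu : ∀ y ∈ Y, u y = g y)
    (hmin : IsMinOn (lv G Y) {v | ∀ y ∈ Y, v y = g y} u) : Tight G Y u := by
  rintro ⟨v, hvY, hsup⟩
  set SA := {d : ℝ | ∃ x, x ∉ (Y : Set X) ∧ Sloc G u x = d ∧ Sloc G v x < Sloc G u x}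
  set SB := {d : ℝ | ∃ x, x ∉ (Y : Set X) ∧ Sloc G v x = d ∧ Sloc G u x < Sloc G v x}
  have hSA : SA.Finite :=
    (Set.finite_range (Sloc G u)).subset (by rintro _ ⟨x, -, rfl, -⟩; exact ⟨x, rfl⟩)
  have hSB : BddAbove SB :=
    ((Set.finite_range (Sloc G v)).subset (by rintro _ ⟨x, -, rfl, -⟩; exact ⟨x, rfl⟩)).bddAbove
  have hSA_ne : SA.Nonempty := by
    by_contra h
    rw [Set.not_nonempty_iff_eq_empty.mp h, Real.sSup_empty] at hsup
    exact hsup.not_ge (Real.sSup_nonneg fun _ ⟨x, _, hx, _⟩ => hx ▸ Sloc_nonneg G v x)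
  obtain ⟨x₀, hx₀Y, hx₀, hx₀lt⟩ := hSA_ne.csSup_mem hSA
  have hlt : lv G Y v < lv G Y u := by
    simp only [lv_eq_sort_ge]
    refine Multiset.sort_ge_map_lt_sort_ge_map (Finset.mem_sdiff.mpr ⟨Finset.mem_univ x₀, hx₀Y⟩)
      hx₀lt fun x hx hworse => ?_
    rw [hx₀]
    exact (le_csSup hSB ⟨x, (Finset.mem_sdiff.mp hx).2, rfl, hworse⟩).trans_lt hsup
  exact hlt.not_ge (hmin fun y hy => (hvY y hy).trans (hu y hy))

end Extension

theorem stmt1_general {X : Type*} [Fintype X] [DecidableEq X] {m : ℕ} (G : SimpleGraph X)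
    (Y : Finset X)
    (g : X → EuclideanSpace ℝ (Fin m)) :
    (∃ u : X → EuclideanSpace ℝ (Fin m), (∀ y ∈ Y, u y = g y) ∧
      ∀ v : X → EuclideanSpace ℝ (Fin m), (∀ y ∈ Y, v y = g y) →
        ¬ List.Lex (· < ·) (lv G Y v) (lv G Y u)) ∧
    (∀ u : X → EuclideanSpace ℝ (Fin m), (∀ y ∈ Y, u y = g y) →
      (∀ v : X → EuclideanSpace ℝ (Fin m), (∀ y ∈ Y, v y = g y) →
        ¬ List.Lex (· < ·) (lv G Y v) (lv G Y u)) →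
      Tight G (Y : Set X) u) := by
  obtain ⟨u, hu, hmin⟩ := exists_isMinOn_lv G Y g
  exact ⟨⟨u, hu, fun v hv hlt => (isMinOn_iff.mp hmin v hv).not_gt hlt⟩,
    fun u hu hmin => tight_of_isMinOn_lv G Y hu fun v hv =>
      show lv G Y u ≤ lv G Y v from not_lt.mp (hmin v hv)⟩

theorem stmt1 {X : Type*} [Fintype X] [DecidableEq X] {m : ℕ} (G : SimpleGraph X)
    (hconn : G.Connected) (Y : Finset X) (hY : Y.Nonempty)
    (g : X → EuclideanSpace ℝ (Fin m)) :
    (∃ u : X → EuclideanSpace ℝ (Fin m), (∀ y ∈ Y, u y = g y) ∧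
      ∀ v : X → EuclideanSpace ℝ (Fin m), (∀ y ∈ Y, v y = g y) →
        ¬ List.Lex (· < ·) (lv G Y v) (lv G Y u)) ∧
    (∀ u : X → EuclideanSpace ℝ (Fin m), (∀ y ∈ Y, u y = g y) →
      (∀ v : X → EuclideanSpace ℝ (Fin m), (∀ y ∈ Y, v y = g y) →
        ¬ List.Lex (· < ·) (lv G Y v) (lv G Y u)) →
      Tight G (Y : Set X) u) :=
  stmt1_general G Y g
end

section
/- Each function u_t(z) = t z² + (1−t) z²/|z| on the closed unit disk (with u_t(0)=0) satisfies the absolutely-minimizing-Lipschitz property: for every open V ⊆ B₁(0), Lip(u_t, V) = Lip(u_t, ∂V). In particular, AML extensions of vector-valued boundary data are not unique: all u_t, t ∈ [0,1], agree on ∂B₁(0) but are distinct AML extensions. -/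
/-- The Lipschitz constant of `f` on `s`: `Lip(f,s) = sup_{x ≠ y ∈ s} ‖f x - f y‖/‖x - y‖`. -/
noncomputable def LipOn (f : ℂ → ℂ) (s : Set ℂ) : ℝ :=
  sSup {c : ℝ | ∃ x ∈ s, ∃ y ∈ s, x ≠ y ∧ c = ‖f x - f y‖ / ‖x - y‖}

/-- The local Lipschitz constant `L f(x) = inf_{r>0} Lip(f, U ∩ B_r(x))`. -/
noncomputable def Lloc (U : Set ℂ) (f : ℂ → ℂ) (x : ℂ) : ℝ :=
  sInf {c : ℝ | ∃ r > (0:ℝ), c = LipOn f (U ∩ Metric.ball x r)}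

/-- `v` is tighter than `u` on `U`. -/
def TighterC (U : Set ℂ) (v u : ℂ → ℂ) : Prop :=
  (∀ x ∈ frontier U, v x = u x) ∧
    sSup {c : ℝ | ∃ x ∈ U, Lloc U u x = c ∧ Lloc U v x < Lloc U u x} >
      sSup {c : ℝ | ∃ x ∈ U, Lloc U v x = c ∧ Lloc U u x < Lloc U v x}

/-- The family `u_t(z) = t z² + (1-t) z²/|z|`, with `u_t(0) = 0`. -/
noncomputable def ut (t : ℝ) (z : ℂ) : ℂ :=
  if z = 0 then 0 else (t : ℂ) * z^2 + ((1 - t : ℝ) : ℂ) * z^2 / (‖z‖ : ℂ)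


/-!
In polar form `ut t (ρ w) = φ(ρ) w²` with `φ(ρ) = tρ² + (1-t)ρ` and `‖w‖ = 1`. Let `R` be the
largest modulus of a point of `V̄`. Since `z ↦ z²/‖z‖` is `2`-Lipschitz, `ut t` is
`(2tR + 2(1-t))`-Lipschitz on the closed disc of radius `R`, so both Lipschitz constants are at
most `2φ(R)/R = 2tR + 2(1-t)`. This value is the tangential stretch of `ut t` at modulus `R`, and it
is approached along pairs `ρ₁ w`, `ρ₂ w ω` with `ρ₂` near `R`, `ω` near `1` and `|ρ₁ - ρ₂|` small
compared with `‖1 - ω‖`. Such pairs lie in `V` by openness, and also in `∂V`: starting from a point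
`s w ∈ V` with `s` near `R`, either a small rotation `s w ω^{±1}` stays in `V`, and the two rays
through these points leave `V` at moduli in `[s, R]`, or rotating either way leaves `V`, and the
two exit points lie on the circle of radius `s`.
-/

open Complex Set Metric

theorem IsPreconnected.exists_mem_frontier_of_continuousOn {X Y : Type*} [TopologicalSpace X]
    [TopologicalSpace Y] {T : Set X} {s : Set Y} {f : X → Y} (hT : IsPreconnected T)
    (hf : ContinuousOn f T) (hs : IsOpen s) {x y : X} (hx : x ∈ T) (hy : y ∈ T)
    (hfx : f x ∈ s) (hfy : f y ∉ s) : ∃ c ∈ T, f c ∈ frontier s := by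
  by_contra! h
  have himage : f '' T ⊆ s := by
    refine (hT.image f hf).subset_of_closure_inter_subset hs ⟨f x, ⟨x, hx, rfl⟩, hfx⟩ ?_
    rintro _ ⟨hcl, c, hc, rfl⟩
    by_contra hns
    exact h c hc ⟨hcl, by rwa [hs.interior_eq]⟩
  exact hfy (himage ⟨y, hy, rfl⟩)

theorem norm_smul_sub_le_of_norm_le {E : Type*} [NormedAddCommGroup E] [InnerProductSpace ℝ E]
    {x y : E} (hyx : ‖y‖ ≤ ‖x‖) : ‖(‖y‖ / ‖x‖) • x - y‖ ≤ ‖x - y‖ := by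
  rcases eq_or_ne x 0 with rfl | hx
  · simp [norm_le_zero_iff.1 (by simpa using hyx)]
  have hx' : 0 < ‖x‖ := norm_pos_iff.2 hx
  set l := ‖y‖ / ‖x‖
  have hl : l * ‖x‖ = ‖y‖ := div_mul_cancel₀ _ hx'.ne'
  have hl1 : 0 ≤ 1 - l := sub_nonneg.2 (div_le_one_of_le₀ hyx hx'.le)
  rw [← sq_le_sq₀ (norm_nonneg _) (norm_nonneg _), norm_sub_sq_real, norm_sub_sq_real, norm_smul,
    real_inner_smul_left, Real.norm_of_nonneg (by positivity)]
  nlinarith [mul_le_mul_of_nonneg_left (real_inner_le_norm x y) hl1, sq_nonneg (‖x‖ - ‖y‖)]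

theorem norm_sq_div_norm_sub_le (x y : ℂ) : ‖x ^ 2 / ‖x‖ - y ^ 2 / ‖y‖‖ ≤ 2 * ‖x - y‖ := by
  wlog hyx : ‖y‖ ≤ ‖x‖ generalizing x y
  · rw [norm_sub_rev, norm_sub_rev x]
    exact this y x (le_of_not_ge hyx)
  rcases eq_or_ne x 0 with rfl | hx
  · simp [norm_le_zero_iff.1 (by simpa using hyx)]
  have hsplit : x ^ 2 / ‖x‖ - y ^ 2 / ‖y‖
      = (x - y) * (x / ‖x‖) + y / ‖y‖ * ((‖y‖ / ‖x‖ : ℝ) * x - y) := by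
    rcases eq_or_ne y 0 with rfl | hy
    · simp; ring
    · have : (‖x‖ : ℂ) ≠ 0 := by simpa using hx
      have : (‖y‖ : ℂ) ≠ 0 := by simpa using hy
      push_cast
      field_simp
      ring
  have hunit (z : ℂ) : ‖z / ‖z‖‖ ≤ 1 := by
    by_cases hz : z = 0 <;> simp [hz]
  calc ‖x ^ 2 / ‖x‖ - y ^ 2 / ‖y‖‖
      ≤ ‖x - y‖ * 1 + 1 * ‖(‖y‖ / ‖x‖ : ℝ) * x - y‖ := by
        rw [hsplit]
        refine (norm_add_le _ _).trans (add_le_add ?_ ?_) <;> rw [norm_mul]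
        · gcongr; exact hunit x
        · gcongr; exact hunit y
    _ ≤ 2 * ‖x - y‖ := by
        rw [← Complex.real_smul]
        linarith [norm_smul_sub_le_of_norm_le hyx]

-- Also valid at `z = 0`, where `z ^ 2 / ‖z‖ = 0 / 0 = 0`.
theorem ut_eq (t : ℝ) (z : ℂ) : ut t z = t * z ^ 2 + (1 - t : ℝ) * (z ^ 2 / ‖z‖) := by
  unfold ut
  split_ifs with h
  · simp [h]
  · ring

theorem norm_ut_sub_le {t R : ℝ} (ht0 : 0 ≤ t) (ht1 : t ≤ 1) {x y : ℂ} (hx : ‖x‖ ≤ R)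
    (hy : ‖y‖ ≤ R) : ‖ut t x - ut t y‖ ≤ (2 * t * R + 2 * (1 - t)) * ‖x - y‖ := by
  have hsplit : ut t x - ut t y
      = t * ((x + y) * (x - y)) + (1 - t : ℝ) * (x ^ 2 / ‖x‖ - y ^ 2 / ‖y‖) := by
    rw [ut_eq, ut_eq]; ring
  have hxy : ‖x + y‖ ≤ 2 * R := (norm_add_le x y).trans (by linarith)
  calc ‖ut t x - ut t y‖ ≤ t * (‖x + y‖ * ‖x - y‖) + (1 - t) * (2 * ‖x - y‖) := by
        rw [hsplit]
        refine (norm_add_le _ _).trans (add_le_add ?_ ?_) <;>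
          rw [norm_mul, Complex.norm_real, Real.norm_of_nonneg (by linarith)]
        · rw [norm_mul]
        · gcongr
          exact norm_sq_div_norm_sub_le x y
    _ ≤ (2 * t * R + 2 * (1 - t)) * ‖x - y‖ := by
        nlinarith [mul_le_mul_of_nonneg_right hxy (norm_nonneg (x - y))]

def utProfile (t ρ : ℝ) : ℝ := t * ρ ^ 2 + (1 - t) * ρ

theorem ut_ofReal_mul (t : ℝ) {ρ : ℝ} (hρ : 0 ≤ ρ) {w : ℂ} (hw : ‖w‖ = 1) :
    ut t (ρ * w) = utProfile t ρ * w ^ 2 := by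
  rw [ut_eq, norm_mul, hw, Complex.norm_real, Real.norm_of_nonneg hρ, mul_one, utProfile]
  rcases hρ.eq_or_lt with rfl | hρ
  · simp
  · have : (ρ : ℂ) ≠ 0 := by exact_mod_cast hρ.ne'
    push_cast
    field_simp

theorem utProfile_nonneg {t ρ : ℝ} (ht0 : 0 ≤ t) (ht1 : t ≤ 1) (hρ : 0 ≤ ρ) :
    0 ≤ utProfile t ρ := by
  unfold utProfile
  nlinarith

theorem abs_utProfile_sub_le {t ρ₁ ρ₂ : ℝ} (ht0 : 0 ≤ t) (ht1 : t ≤ 1) (hρ₁ : ρ₁ ∈ Icc 0 1)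
    (hρ₂ : ρ₂ ∈ Icc 0 1) : |utProfile t ρ₁ - utProfile t ρ₂| ≤ 2 * |ρ₁ - ρ₂| := by
  have : utProfile t ρ₁ - utProfile t ρ₂ = (t * (ρ₁ + ρ₂) + (1 - t)) * (ρ₁ - ρ₂) := by
    unfold utProfile; ring
  rw [this, abs_mul]
  gcongr
  obtain ⟨h₁, h₁'⟩ := hρ₁
  obtain ⟨h₂, h₂'⟩ := hρ₂
  rw [abs_le]
  constructor <;> nlinarith

theorem norm_ofReal_mul_sub_le {ρ₁ ρ₂ : ℝ} (hρ₂ : 0 ≤ ρ₂) {w ω : ℂ} (hw : ‖w‖ = 1) :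
    ‖(ρ₁ : ℂ) * w - ρ₂ * (w * ω)‖ ≤ ρ₂ * ‖1 - ω‖ + |ρ₁ - ρ₂| := by
  have : (ρ₁ : ℂ) * w - ρ₂ * (w * ω) = w * (ρ₂ * (1 - ω) + ((ρ₁ - ρ₂ : ℝ) : ℂ)) := by
    push_cast; ring
  rw [this, norm_mul, hw, one_mul]
  refine (norm_add_le _ _).trans_eq ?_
  rw [norm_mul, Complex.norm_real, Complex.norm_real, Real.norm_of_nonneg hρ₂, Real.norm_eq_abs]

theorem le_norm_ut_ofReal_mul_sub {t ρ₁ ρ₂ : ℝ} (ht0 : 0 ≤ t) (ht1 : t ≤ 1) (hρ₁ : ρ₁ ∈ Icc 0 1)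
    (hρ₂ : ρ₂ ∈ Icc 0 1) {w ω : ℂ} (hw : ‖w‖ = 1) (hω : ‖ω‖ = 1) :
    utProfile t ρ₂ * ‖1 - ω‖ * (2 - ‖1 - ω‖) - 2 * |ρ₁ - ρ₂|
      ≤ ‖ut t (ρ₁ * w) - ut t (ρ₂ * (w * ω))‖ := by
  have hwω : ‖w * ω‖ = 1 := by rw [norm_mul, hw, hω, one_mul]
  have hsplit : (utProfile t ρ₁ : ℂ) * w ^ 2 - utProfile t ρ₂ * (w * ω) ^ 2
      = w ^ 2 * (utProfile t ρ₂ * ((1 - ω) * (1 + ω))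
        + ((utProfile t ρ₁ - utProfile t ρ₂ : ℝ) : ℂ)) := by
    push_cast; ring
  have hplus : 2 - ‖1 - ω‖ ≤ ‖1 + ω‖ := by
    have := norm_add_le (1 + ω) (1 - ω)
    rw [show 1 + ω + (1 - ω) = (2 : ℂ) by ring, Complex.norm_two] at this
    linarith
  have hφ₂ := utProfile_nonneg ht0 ht1 hρ₂.1
  rw [ut_ofReal_mul t hρ₁.1 hw, ut_ofReal_mul t hρ₂.1 hwω, hsplit, norm_mul, norm_pow, hw,
    one_pow, one_mul]
  refine le_trans ?_ (sub_le_iff_le_add.2 (norm_le_add_norm_add _ _))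
  rw [norm_mul, norm_mul, Complex.norm_real, Complex.norm_real, Real.norm_of_nonneg hφ₂,
    Real.norm_eq_abs]
  have := abs_utProfile_sub_le ht0 ht1 hρ₁ hρ₂
  nlinarith [mul_le_mul_of_nonneg_left hplus (mul_nonneg hφ₂ (norm_nonneg (1 - ω)))]

/-- Pairs `ρ₁ w`, `ρ₂ w ω` near the circle of radius `R` whose radial separation is small compared
with their angular separation `‖1 - ω‖`; along them the difference quotient of `ut t` tends to
`2 utProfile t R / R`. -/
def AlmostTangentPair (R γ : ℝ) (x y : ℂ) : Prop :=
  ∃ (ρ₁ ρ₂ : ℝ) (w ω : ℂ), x = ρ₁ * w ∧ y = ρ₂ * (w * ω) ∧ ‖w‖ = 1 ∧ ‖ω‖ = 1 ∧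
    ρ₁ ∈ Icc 0 R ∧ ρ₂ ∈ Icc 0 R ∧ R - γ < ρ₂ ∧ 0 < ‖1 - ω‖ ∧ ‖1 - ω‖ ≤ γ ∧
    |ρ₁ - ρ₂| ≤ γ * ‖1 - ω‖

theorem exists_forall_almostTangentPair_lt_div {t R c : ℝ} (ht0 : 0 ≤ t) (ht1 : t ≤ 1)
    (hR : 0 < R) (hR1 : R ≤ 1) (hc0 : 0 ≤ c) (hc : c < 2 * t * R + 2 * (1 - t)) :
    ∃ γ > 0, ∀ x y, AlmostTangentPair R γ x y →
      x ≠ y ∧ c < ‖ut t x - ut t y‖ / ‖x - y‖ := by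
  -- For a pair with `ρ₂ = ρ`, `‖1 - ω‖ = e`, `|ρ₁ - ρ₂| ≤ g e`, the quantity `e * G (ρ, e, g)`
  -- bounds `‖ut t x - ut t y‖ - c ‖x - y‖` from below, and `G (R, 0, 0) = R (2tR + 2(1-t) - c)`.
  let G : ℝ × ℝ × ℝ → ℝ := fun p =>
    utProfile t p.1 * (2 - p.2.1) - 2 * p.2.2 - c * (p.1 + p.2.2)
  have hG : Continuous G := by unfold G utProfile; fun_prop
  have hG0 : 0 < G (R, 0, 0) := by simp only [G, utProfile]; nlinarith
  obtain ⟨δ, hδ, hδG⟩ :=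
    Metric.eventually_nhds_iff.1 (hG.continuousAt.eventually (lt_mem_nhds hG0))
  refine ⟨δ / 2, by positivity, ?_⟩
  rintro _ _ ⟨ρ₁, ρ₂, w, ω, rfl, rfl, hw, hω, hρ₁, hρ₂, hρ₂γ, he0, heγ, hρ⟩
  have hN := le_norm_ut_ofReal_mul_sub ht0 ht1 ⟨hρ₁.1, hρ₁.2.trans hR1⟩
    ⟨hρ₂.1, hρ₂.2.trans hR1⟩ hw hω (t := t)
  have hD := norm_ofReal_mul_sub_le hρ₂.1 hw (ρ₁ := ρ₁) (ω := ω)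
  set e := ‖1 - ω‖
  have hGe : 0 < G (ρ₂, e, δ / 2) := by
    refine hδG ?_
    simp only [Prod.dist_eq, Real.dist_eq, sub_zero, max_lt_iff, abs_lt]
    refine ⟨⟨?_, ?_⟩, ⟨?_, ?_⟩, ?_, ?_⟩ <;> linarith [hρ₂.2]
  have hlt : c * ‖(ρ₁ : ℂ) * w - ρ₂ * (w * ω)‖ < ‖ut t (ρ₁ * w) - ut t (ρ₂ * (w * ω))‖ := by
    calc c * ‖(ρ₁ : ℂ) * w - ρ₂ * (w * ω)‖ ≤ c * (e * (ρ₂ + δ / 2)) := by gcongr; linarith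
      _ < e * (utProfile t ρ₂ * (2 - e) - 2 * (δ / 2)) := by
        have := mul_pos he0 hGe
        simp only [G] at this
        linarith
      _ ≤ ‖ut t (ρ₁ * w) - ut t (ρ₂ * (w * ω))‖ := by nlinarith
  have hxy : (ρ₁ : ℂ) * w ≠ ρ₂ * (w * ω) := by
    intro h
    simp [h] at hlt
  exact ⟨hxy, (lt_div_iff₀ (norm_pos_iff.2 (sub_ne_zero.2 hxy))).2 hlt⟩

theorem LipOn_eq_of_forall_le_of_forall_lt {f : ℂ → ℂ} {S : Set ℂ} {K : ℝ} (hK : 0 < K)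
    (hle : ∀ x ∈ S, ∀ y ∈ S, ‖f x - f y‖ ≤ K * ‖x - y‖)
    (hlt : ∀ c, 0 ≤ c → c < K → ∃ x ∈ S, ∃ y ∈ S, x ≠ y ∧ c < ‖f x - f y‖ / ‖x - y‖) :
    LipOn f S = K := by
  obtain ⟨x, hx, y, hy, hxy, -⟩ := hlt 0 le_rfl hK
  refine csSup_eq_of_forall_le_of_forall_lt_exists_gt ⟨_, x, hx, y, hy, hxy, rfl⟩ ?_ ?_
  · rintro _ ⟨x, hx, y, hy, -, rfl⟩
    exact div_le_of_le_mul₀ (norm_nonneg _) hK.le (hle x hx y hy)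
  · intro c hc
    obtain ⟨x, hx, y, hy, hxy, h⟩ := hlt (max c 0) (le_max_right _ _) (max_lt hc hK)
    exact ⟨_, ⟨x, hx, y, hy, hxy, rfl⟩, (le_max_left _ _).trans_lt h⟩

theorem LipOn_ut_eq {t R : ℝ} (ht0 : 0 ≤ t) (ht1 : t ≤ 1) (hR : 0 < R) (hR1 : R ≤ 1)
    {S : Set ℂ} (hS : ∀ z ∈ S, ‖z‖ ≤ R)
    (hpair : ∀ γ > 0, ∃ x ∈ S, ∃ y ∈ S, AlmostTangentPair R γ x y) :
    LipOn (ut t) S = 2 * t * R + 2 * (1 - t) := by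
  refine LipOn_eq_of_forall_le_of_forall_lt (by nlinarith)
    (fun x hx y hy => norm_ut_sub_le ht0 ht1 (hS x hx) (hS y hy)) fun c hc0 hc => ?_
  obtain ⟨γ, hγ, hγc⟩ := exists_forall_almostTangentPair_lt_div ht0 ht1 hR hR1 hc0 hc
  obtain ⟨x, hx, y, hy, hxy⟩ := hpair γ hγ
  exact ⟨x, hx, y, hy, hγc x y hxy⟩

theorem norm_one_sub_exp_I_mul_ofReal_le (θ : ℝ) : ‖1 - exp (I * θ)‖ ≤ |θ| := by
  rw [norm_sub_rev]
  exact Real.norm_exp_I_mul_ofReal_sub_one_le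

theorem norm_one_sub_exp_I_mul_ofReal_pos {θ : ℝ} (hθ₀ : 0 < θ) (hθ : θ < 2 * Real.pi) :
    0 < ‖1 - exp (I * θ)‖ := by
  rw [norm_sub_rev, norm_exp_I_mul_ofReal_sub_one]
  have := Real.sin_pos_of_pos_of_lt_pi (x := θ / 2) (by linarith) (by linarith)
  rw [norm_mul, Real.norm_of_nonneg this.le]
  norm_num [this]

noncomputable def outerRadius (V : Set ℂ) : ℝ := sSup (norm '' V)

section OuterRadius

variable {V : Set ℂ}

theorem norm_le_outerRadius (hV1 : V ⊆ ball 0 1) {z : ℂ} (hz : z ∈ closure V) :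
    ‖z‖ ≤ outerRadius V := by
  have hbdd : BddAbove (norm '' V) :=
    ⟨1, by rintro _ ⟨x, hx, rfl⟩; exact (mem_ball_zero_iff.1 (hV1 hx)).le⟩
  exact closure_minimal (fun x hx => le_csSup hbdd ⟨x, hx, rfl⟩)
    (isClosed_le continuous_norm continuous_const) hz

theorem outerRadius_le_one (hV1 : V ⊆ ball 0 1) (hne : V.Nonempty) : outerRadius V ≤ 1 :=
  csSup_le (hne.image _) (by rintro _ ⟨x, hx, rfl⟩; exact (mem_ball_zero_iff.1 (hV1 hx)).le)

theorem outerRadius_pos (hV : IsOpen V) (hV1 : V ⊆ ball 0 1) (hne : V.Nonempty) :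
    0 < outerRadius V := by
  by_contra! h
  have : V = {0} := eq_singleton_iff_nonempty_unique_mem.2 ⟨hne, fun x hx =>
    norm_le_zero_iff.1 ((norm_le_outerRadius hV1 (subset_closure hx)).trans h)⟩
  exact not_isOpen_singleton (0 : ℂ) (this ▸ hV)

theorem exists_ofReal_mul_mem_of_lt_outerRadius (hV : IsOpen V) (hV1 : V ⊆ ball 0 1)
    (hne : V.Nonempty) {r : ℝ} (hr : r < outerRadius V) :
    ∃ (s : ℝ) (w : ℂ), ‖w‖ = 1 ∧ r < s ∧ 0 < s ∧ s ≤ outerRadius V ∧ (s : ℂ) * w ∈ V := by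
  obtain ⟨_, ⟨p, hp, rfl⟩, hrp⟩ :=
    exists_lt_of_lt_csSup (hne.image _) (max_lt hr (outerRadius_pos hV hV1 hne))
  have hp0 : 0 < ‖p‖ := (le_max_right _ _).trans_lt hrp
  have hp0' : (‖p‖ : ℂ) ≠ 0 := by exact_mod_cast hp0.ne'
  refine ⟨‖p‖, p / ‖p‖, ?_, (le_max_left _ _).trans_lt hrp, hp0,
    norm_le_outerRadius hV1 (subset_closure hp), ?_⟩
  · rw [norm_div, Complex.norm_real, norm_norm, div_self hp0.ne']
  · rwa [mul_div_cancel₀ _ hp0']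

theorem exists_ofReal_mul_mem_frontier_of_ray (hV : IsOpen V) (hV1 : V ⊆ ball 0 1) {s : ℝ}
    (hs : 0 < s) {w : ℂ} (hw : ‖w‖ = 1) (hsw : (s : ℂ) * w ∈ V) :
    ∃ ρ, s ≤ ρ ∧ ρ ≤ outerRadius V ∧ (ρ : ℂ) * w ∈ frontier V := by
  have hnorm {ρ : ℝ} (hρ : 0 ≤ ρ) : ‖(ρ : ℂ) * w‖ = ρ := by
    rw [norm_mul, hw, Complex.norm_real, Real.norm_of_nonneg hρ, mul_one]
  have hs1 : s < 1 := hnorm hs.le ▸ mem_ball_zero_iff.1 (hV1 hsw)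
  have hout : ((1 : ℝ) : ℂ) * w ∉ V := fun h =>
    (hnorm zero_le_one ▸ mem_ball_zero_iff.1 (hV1 h)).false
  obtain ⟨ρ, hρ, hρV⟩ := isPreconnected_Icc.exists_mem_frontier_of_continuousOn
    (f := fun ρ : ℝ => (ρ : ℂ) * w) (by fun_prop) hV ⟨le_rfl, hs1.le⟩ ⟨hs1.le, le_rfl⟩ hsw hout
  refine ⟨ρ, hρ.1, ?_, hρV⟩
  exact hnorm (hs.le.trans hρ.1) ▸ norm_le_outerRadius hV1 (frontier_subset_closure hρV)

theorem exists_mem_frontier_of_arc (hV : IsOpen V) {s : ℝ} {w : ℂ} (hsw : (s : ℂ) * w ∈ V)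
    {θ : ℝ} (hθ : (s : ℂ) * (w * exp (I * θ)) ∉ V) :
    ∃ φ ∈ uIcc 0 θ, φ ≠ 0 ∧ (s : ℂ) * (w * exp (I * φ)) ∈ frontier V := by
  obtain ⟨φ, hφ, hφV⟩ := isPreconnected_uIcc.exists_mem_frontier_of_continuousOn
    (f := fun φ : ℝ => (s : ℂ) * (w * exp (I * φ))) (by fun_prop) hV (x := 0) (y := θ)
    left_mem_uIcc right_mem_uIcc (by simpa using hsw) hθ
  refine ⟨φ, hφ, ?_, hφV⟩
  rintro rfl
  rw [hV.frontier_eq] at hφV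
  exact hφV.2 (by simpa using hsw)

end OuterRadius

section AlmostTangentPairs

variable {V : Set ℂ}

theorem exists_almostTangentPair_mem (hV : IsOpen V) (hV1 : V ⊆ ball 0 1) (hne : V.Nonempty)
    {γ : ℝ} (hγ : 0 < γ) : ∃ x ∈ V, ∃ y ∈ V, AlmostTangentPair (outerRadius V) γ x y := by
  obtain ⟨s, w, hw, hsγ, hs, hsR, hsw⟩ :=
    exists_ofReal_mul_mem_of_lt_outerRadius hV hV1 hne (sub_lt_self _ hγ)
  obtain ⟨r, hr, hball⟩ := Metric.isOpen_iff.1 hV _ hsw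
  have hs1 : s ≤ 1 := hsR.trans (outerRadius_le_one hV1 hne)
  set θ := min (min γ r) 1 / 2 with hθ_def
  have hθ : 0 < θ := by positivity
  have hθγ : θ < γ := by linarith [hθ_def, min_le_left (min γ r) 1, min_le_left γ r]
  have hθr : θ < r := by linarith [hθ_def, min_le_left (min γ r) 1, min_le_right γ r]
  have hθ1 : θ ≤ 1 / 2 := by linarith [hθ_def, min_le_right (min γ r) 1]
  have he : ‖1 - exp (I * θ)‖ ≤ θ :=
    (norm_one_sub_exp_I_mul_ofReal_le θ).trans_eq (abs_of_pos hθ)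
  refine ⟨s * w, hsw, s * (w * exp (I * θ)), hball ?_, s, s, w, exp (I * θ), rfl, rfl, hw,
    norm_exp_I_mul_ofReal θ, ⟨hs.le, hsR⟩, ⟨hs.le, hsR⟩, hsγ,
    norm_one_sub_exp_I_mul_ofReal_pos hθ (by linarith [Real.pi_gt_three]), he.trans hθγ.le,
    by rw [sub_self, abs_zero]; positivity⟩
  rw [mem_ball, dist_eq_norm, show (s : ℂ) * (w * exp (I * θ)) - s * w
    = s * w * -(1 - exp (I * θ)) by ring, norm_mul, norm_mul, norm_neg, hw, Complex.norm_real,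
    Real.norm_of_nonneg hs.le, mul_one]
  nlinarith [norm_nonneg (1 - exp (I * θ))]

theorem exists_almostTangentPair_frontier_of_rays (hV : IsOpen V) (hV1 : V ⊆ ball 0 1)
    {γ s : ℝ} {w ω : ℂ} (hs : 0 < s) (hw : ‖w‖ = 1) (hω : ‖ω‖ = 1) (he0 : 0 < ‖1 - ω‖)
    (heγ : ‖1 - ω‖ ≤ γ) (hsγ : outerRadius V - min γ (γ * ‖1 - ω‖) < s)
    (h₁ : (s : ℂ) * w ∈ V) (h₂ : (s : ℂ) * (w * ω) ∈ V) :
    ∃ x ∈ frontier V, ∃ y ∈ frontier V, AlmostTangentPair (outerRadius V) γ x y := by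
  have hwω : ‖w * ω‖ = 1 := by rw [norm_mul, hw, hω, one_mul]
  obtain ⟨ρ₁, hsρ₁, hρ₁R, hρ₁V⟩ := exists_ofReal_mul_mem_frontier_of_ray hV hV1 hs hw h₁
  obtain ⟨ρ₂, hsρ₂, hρ₂R, hρ₂V⟩ := exists_ofReal_mul_mem_frontier_of_ray hV hV1 hs hwω h₂
  have hmin₁ := min_le_left γ (γ * ‖1 - ω‖)
  have hmin₂ := min_le_right γ (γ * ‖1 - ω‖)
  refine ⟨_, hρ₁V, _, hρ₂V, ρ₁, ρ₂, w, ω, rfl, rfl, hw, hω, ⟨by linarith, hρ₁R⟩,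
    ⟨by linarith, hρ₂R⟩, by linarith, he0, heγ, ?_⟩
  rw [abs_le]
  constructor <;> linarith

theorem exists_almostTangentPair_frontier (hV : IsOpen V) (hV1 : V ⊆ ball 0 1)
    (hne : V.Nonempty) {γ : ℝ} (hγ : 0 < γ) :
    ∃ x ∈ frontier V, ∃ y ∈ frontier V, AlmostTangentPair (outerRadius V) γ x y := by
  set θ := min γ 1 / 2 with hθ_def
  have hθ : 0 < θ := by positivity
  have hθγ : 2 * θ ≤ γ := by linarith [hθ_def, min_le_left γ 1]
  have hθ1 : 2 * θ ≤ 1 := by linarith [hθ_def, min_le_right γ 1]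
  set ω := exp (I * θ)
  have hω : ‖ω‖ = 1 := norm_exp_I_mul_ofReal θ
  have he0 : 0 < ‖1 - ω‖ :=
    norm_one_sub_exp_I_mul_ofReal_pos hθ (by linarith [Real.pi_gt_three])
  have heγ : ‖1 - ω‖ ≤ γ :=
    (norm_one_sub_exp_I_mul_ofReal_le θ).trans (by rw [abs_of_pos hθ]; linarith)
  obtain ⟨s, w, hw, hsγ, hs, hsR, hsw⟩ := exists_ofReal_mul_mem_of_lt_outerRadius hV hV1 hne
    (sub_lt_self _ (lt_min hγ (mul_pos hγ he0)))
  by_cases hplus : (s : ℂ) * (w * ω) ∈ V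
  · exact exists_almostTangentPair_frontier_of_rays hV hV1 hs hw hω he0 heγ hsγ hsw hplus
  set ω' := exp (I * ↑(-θ))
  by_cases hminus : (s : ℂ) * (w * ω') ∈ V
  · have hω'ω : ω' * ω = 1 := by rw [← Complex.exp_add]; push_cast; ring_nf; exact exp_zero
    refine exists_almostTangentPair_frontier_of_rays hV hV1 hs ?_ hω he0 heγ hsγ hminus ?_
    · rw [norm_mul, hw, norm_exp_I_mul_ofReal, one_mul]
    · rwa [mul_assoc, hω'ω, mul_one]
  -- Rotating either way leaves `V`: the two exit points lie on the circle of radius `s`.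
  obtain ⟨φ₁, hφ₁, hφ₁0, hφ₁V⟩ := exists_mem_frontier_of_arc hV hsw hplus
  obtain ⟨φ₂, hφ₂, hφ₂0, hφ₂V⟩ := exists_mem_frontier_of_arc hV hsw hminus
  rw [uIcc_of_le hθ.le] at hφ₁
  rw [uIcc_of_ge (by linarith)] at hφ₂
  have hφ : 0 < φ₁ - φ₂ := by linarith [hφ₁.1.lt_of_ne' hφ₁0, hφ₂.2.lt_of_ne hφ₂0]
  have hφθ : φ₁ - φ₂ ≤ 2 * θ := by linarith [hφ₁.2, hφ₂.1]
  have hrot : w * exp (I * φ₂) * exp (I * ↑(φ₁ - φ₂)) = w * exp (I * φ₁) := by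
    rw [mul_assoc, ← Complex.exp_add]
    push_cast
    ring_nf
  refine ⟨_, hφ₂V, s * (w * exp (I * φ₂) * exp (I * ↑(φ₁ - φ₂))), by rwa [hrot], s, s,
    w * exp (I * φ₂), exp (I * ↑(φ₁ - φ₂)), rfl, rfl, ?_, norm_exp_I_mul_ofReal _,
    ⟨hs.le, hsR⟩, ⟨hs.le, hsR⟩, by linarith [min_le_left γ (γ * ‖1 - ω‖)],
    norm_one_sub_exp_I_mul_ofReal_pos hφ (by linarith [Real.pi_gt_three]),
    (norm_one_sub_exp_I_mul_ofReal_le _).trans (by rw [abs_of_pos hφ]; linarith),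
    by rw [sub_self, abs_zero]; positivity⟩
  rw [norm_mul, hw, norm_exp_I_mul_ofReal, one_mul]

end AlmostTangentPairs

theorem LipOn_ut_eq_LipOn_frontier {t : ℝ} (ht0 : 0 ≤ t) (ht1 : t ≤ 1) {V : Set ℂ}
    (hV : IsOpen V) (hV1 : V ⊆ ball 0 1) : LipOn (ut t) V = LipOn (ut t) (frontier V) := by
  rcases V.eq_empty_or_nonempty with rfl | hne
  · rw [frontier_empty]
  have hR := outerRadius_pos hV hV1 hne
  have hR1 := outerRadius_le_one hV1 hne
  rw [LipOn_ut_eq ht0 ht1 hR hR1 (fun z hz => norm_le_outerRadius hV1 (subset_closure hz))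
      fun γ hγ => exists_almostTangentPair_mem hV hV1 hne hγ,
    LipOn_ut_eq ht0 ht1 hR hR1 (fun z hz => norm_le_outerRadius hV1 (frontier_subset_closure hz))
      fun γ hγ => exists_almostTangentPair_frontier hV hV1 hne hγ]

theorem ut_of_norm_eq_one (t : ℝ) {z : ℂ} (hz : ‖z‖ = 1) : ut t z = z ^ 2 := by
  rw [ut_eq, hz]
  push_cast
  ring

theorem ut_half (t : ℝ) : ut t (1 / 2) = (1 / 2 - t / 4 : ℝ) := by
  rw [ut_eq]
  norm_num
  ring

theorem stmt12 :
    (∀ t ∈ Set.Icc (0:ℝ) 1, ∀ V : Set ℂ, IsOpen V → V ⊆ Metric.ball (0:ℂ) 1 →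
      LipOn (ut t) V = LipOn (ut t) (frontier V)) ∧
    (∀ t₁ ∈ Set.Icc (0:ℝ) 1, ∀ t₂ ∈ Set.Icc (0:ℝ) 1, t₁ ≠ t₂ →
      (∀ z ∈ Metric.sphere (0:ℂ) 1, ut t₁ z = ut t₂ z) ∧
      ∃ z ∈ Metric.ball (0:ℂ) 1, ut t₁ z ≠ ut t₂ z) := by
  refine ⟨fun t ht V hV hV1 => LipOn_ut_eq_LipOn_frontier ht.1 ht.2 hV hV1,
    fun t₁ _ t₂ _ hne => ⟨fun z hz => ?_, 1 / 2, by norm_num, ?_⟩⟩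
  · rw [ut_of_norm_eq_one t₁ (mem_sphere_zero_iff_norm.1 hz),
      ut_of_norm_eq_one t₂ (mem_sphere_zero_iff_norm.1 hz)]
  · rw [ut_half, ut_half, Ne, Complex.ofReal_inj]
    intro h
    exact hne (by linarith)
end
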